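/- Let A be a non-periodic ⋆-hypercentral T-brace and let T be the torsion subgroup of the additive group (A,+). Then T is an ideal of A and the quotient brace A/T is abelian. -/

import Mathlib

/-!
Basic theory of left braces (skew left braces of abelian type), following
Dixon–Kurdachenko–Subbotin, "On the structure of braces whose subideals are ideals".
-/

universe u v

/-- A left brace: an abelian group `(A,+)`, a group `(A,·)`, satisfying
`a(b+c) = ab + ac - a`.  (The additive and multiplicative identities then coincide.) -/
class LeftBrace (A : Type u) extends AddCommGroup A, Group A where
  mul_add_eq : ∀ a b c : A, a * (b + c) = a * b + a * c - a

namespace LeftBrace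

variable {A : Type u} [LeftBrace A]

/-- The star operation `a ⋆ b = ab - a - b`. -/
def bstar (a b : A) : A := a * b - a - b

/-- A subset of a left brace is a subbrace if it is closed under the additive-group
and multiplicative-group operations (equivalently, it is a left brace under the
restricted operations). -/
structure IsSubbrace (S : Set A) : Prop where
  zero_mem : (0 : A) ∈ S
  add_mem : ∀ {a b : A}, a ∈ S → b ∈ S → a + b ∈ S
  neg_mem : ∀ {a : A}, a ∈ S → -a ∈ S
  mul_mem : ∀ {a b : A}, a ∈ S → b ∈ S → a * b ∈ S
  inv_mem : ∀ {a : A}, a ∈ S → a⁻¹ ∈ S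

/-- `I` is an ideal of the subbrace `J`: `I ⊆ J`, both are subbraces, and
`a ⋆ z, z ⋆ a ∈ I` for all `a ∈ J`, `z ∈ I`. -/
structure IsIdealIn (I J : Set A) : Prop where
  subset : I ⊆ J
  subbrace : IsSubbrace I
  ambient_subbrace : IsSubbrace J
  star_mem_left : ∀ a ∈ J, ∀ z ∈ I, bstar a z ∈ I
  star_mem_right : ∀ a ∈ J, ∀ z ∈ I, bstar z a ∈ I

/-- `I` is an ideal of the brace `A`. -/
def IsIdeal (I : Set A) : Prop := IsIdealIn I (Set.univ : Set A)

/-- `A` is a T-brace if being an ideal is a transitive relation: an ideal of an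
ideal of `A` is an ideal of `A`. -/
def IsTBrace (A : Type u) [LeftBrace A] : Prop :=
  ∀ I J : Set A, IsIdealIn I J → IsIdeal J → IsIdeal I

/-- The `⋆`-center `ζ(⋆,A) = {a | a ⋆ x = x ⋆ a = 0 for all x}`. -/
def starCenter (A : Type u) [LeftBrace A] : Set A :=
  {a : A | ∀ x : A, bstar a x = 0 ∧ bstar x a = 0}

/-- The preimage in `A` of the `⋆`-center of the quotient of `A` by (the ideal) `S`:
`a` belongs to it iff `a ⋆ x ∈ S` and `x ⋆ a ∈ S` for every `x ∈ A`. -/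
def nextCenter (A : Type u) [LeftBrace A] (S : Set A) : Set A :=
  {a : A | ∀ x : A, bstar a x ∈ S ∧ bstar x a ∈ S}

/-- The upper `⋆`-central series, indexed by naturals:
`ζ₀(⋆,A) = 0` and `ζ_{n+1}(⋆,A)/ζ_n(⋆,A) = ζ(⋆, A/ζ_n(⋆,A))`. -/
def zetaNat (A : Type u) [LeftBrace A] : ℕ → Set A
  | 0 => ({0} : Set A)
  | n + 1 => nextCenter A (zetaNat A n)

/-- The upper `⋆`-central series, indexed by ordinals (unions at limit ordinals). -/
noncomputable def zetaOrd (A : Type u) [LeftBrace A] (o : Ordinal.{v}) : Set A :=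
  Ordinal.limitRecOn o (({0} : Set A))
    (fun _ ih => nextCenter A ih)
    (fun o _ ih => ⋃ (o' : Ordinal) (h : o' < o), ih o' h)

/-- The upper `⋆`-hypercenter `ζ_∞(⋆,A)`: the final (stable) term of the upper
`⋆`-central series, i.e. the union of all its terms. -/
noncomputable def starHypercenter (A : Type u) [LeftBrace A] : Set A :=
  ⋃ o : Ordinal.{u}, zetaOrd A o

/-- `A` is `⋆`-hypercentral if `A = ζ_γ(⋆,A)` for some ordinal `γ`. -/
def IsStarHypercentral (A : Type u) [LeftBrace A] : Prop :=
  ∃ γ : Ordinal.{u}, zetaOrd A γ = (Set.univ : Set A)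

/-- `K ⋆ L`: the additive subgroup of `(A,+)` generated by all `x ⋆ y`, `x ∈ K`, `y ∈ L`. -/
def setStar (K L : Set A) : AddSubgroup A :=
  AddSubgroup.closure {z : A | ∃ x ∈ K, ∃ y ∈ L, z = bstar x y}

/-- `rightStarSeries A n = A^{(n+1)}`, where `A^{(1)} = A` and `A^{(n+1)} = A^{(n)} ⋆ A`. -/
def rightStarSeries (A : Type u) [LeftBrace A] : ℕ → Set A
  | 0 => (Set.univ : Set A)
  | n + 1 => ((setStar (rightStarSeries A n) (Set.univ : Set A) : AddSubgroup A) : Set A)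

/-- `leftStarSeries A n = A^{n+1}`, where `A^1 = A` and `A^{n+1} = A ⋆ A^n`. -/
def leftStarSeries (A : Type u) [LeftBrace A] : ℕ → Set A
  | 0 => (Set.univ : Set A)
  | n + 1 => ((setStar (Set.univ : Set A) (leftStarSeries A n) : AddSubgroup A) : Set A)

/-- `A` is Smoktunowicz-nilpotent if `A^{(n)} = A^k = 0` for some naturals `n, k`. -/
def IsSmoktunowiczNilpotent (A : Type u) [LeftBrace A] : Prop :=
  ∃ n k : ℕ, rightStarSeries A n = ({0} : Set A) ∧ leftStarSeries A k = ({0} : Set A)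

/-- The subbrace generated by a subset `M`: the intersection of all subbraces containing `M`. -/
def braceClosure (M : Set A) : Set A := ⋂₀ {S : Set A | IsSubbrace S ∧ M ⊆ S}

end LeftBrace

/-!
Let `T` be the torsion subgroup. In a `⋆`-hypercentral brace `t ⋆ x` is torsion whenever `t` is:
if `t ∈ ζ_{β+1}` and `n • t = 0`, then `t ^ n ≡ n • t = 0` modulo `ζ_β`, and
`t ^ n ⋆ x = n • (t ⋆ x) + ∑_{i < n} t ^ i ⋆ (t ⋆ x)`; induction on the heights of `t` and of `x`
makes `t ^ n ⋆ x` and the sum torsion, hence `n • (t ⋆ x)` too. So `T` is an ideal.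

Let `D` be the preimage of `ζ(⋆, A/T)`. The heart of the proof is that `ζ₂(⋆, A/T) = ζ(⋆, A/T)`;
induction along the series then gives `D = A`, i.e. `A/T` is abelian.
Take `z` in the preimage of `ζ₂(⋆, A/T)`. Modulo `T` the map `m ↦ (m • z) ⋆ x` is additive, and
stars of elements of `ℤz + D` are multiples of `z ⋆ z`. Hence, for `c ∈ D` with
`z ⋆ z ∈ ℤc + T`, the chain `T + ℤz + ℤc ⊇ T + 2ℤz + 2ℤc ⊇ T + 2ℤz + 4ℤc` consists of
successive ideals below the ideal `D + ℤz`, and transitivity makes `T + 2ℤz + 4ℤc` an ideal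
of `A`. It contains `2 • z`, so it contains `2 • c` for `c = z ⋆ z`, `z ⋆ y` or `y ⋆ z`, and
`2 • c = 2m • z + 4k • c + τ` forces either `c ∈ T` (if `m = 0`) or `2m • z ∈ D`, whence `z ∈ D`
because `A/T` is torsion-free.
-/

theorem IsOfFinAddOrder.of_zsmul {G : Type*} [AddGroup G] {a : G} {m : ℤ}
    (h : IsOfFinAddOrder (m • a)) (hm : m ≠ 0) : IsOfFinAddOrder a := by
  have hn : m.natAbs ≠ 0 := Int.natAbs_ne_zero.mpr hm
  rcases Int.natAbs_eq m with h' | h' <;> rw [h'] at h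
  · rw [natCast_zsmul] at h
    exact h.of_nsmul hn
  · rw [neg_zsmul, natCast_zsmul] at h
    exact h.of_neg.of_nsmul hn

namespace LeftBrace

variable {A : Type u} [LeftBrace A]

theorem one_eq_zero : (1 : A) = 0 := by
  have h := mul_add_eq (1 : A) 0 0
  simp only [add_zero, one_mul, zero_sub] at h
  exact neg_eq_zero.mp h.symm

theorem mul_zero_eq (a : A) : a * 0 = a := by
  rw [← one_eq_zero, mul_one]

theorem zero_mul_eq (a : A) : 0 * a = a := by
  rw [← one_eq_zero, one_mul]

def lam (a : A) : A →+ A where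
  toFun x := a * x - a
  map_zero' := by rw [mul_zero_eq, sub_self]
  map_add' x y := by rw [mul_add_eq]; abel

theorem lam_apply (a x : A) : lam a x = a * x - a := rfl

theorem lam_mul (a b x : A) : lam (a * b) x = lam a (lam b x) := by
  rw [lam_apply b, map_sub, lam_apply, lam_apply, lam_apply, mul_assoc]
  abel

theorem lam_one (x : A) : lam 1 x = x := by
  rw [lam_apply, one_mul, one_eq_zero, sub_zero]

theorem lam_lam_inv (a x : A) : lam a (lam a⁻¹ x) = x := by
  rw [← lam_mul, mul_inv_cancel, lam_one]

theorem lam_inv_lam (a x : A) : lam a⁻¹ (lam a x) = x := by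
  rw [← lam_mul, inv_mul_cancel, lam_one]

theorem bstar_eq_lam_sub (a x : A) : bstar a x = lam a x - x := by
  rw [bstar, lam_apply]

theorem lam_eq_add_bstar (a x : A) : lam a x = x + bstar a x := by
  rw [bstar_eq_lam_sub]; abel

theorem mul_eq_bstar_add_add (a b : A) : a * b = bstar a b + a + b := by
  rw [bstar]; abel

theorem add_eq_mul_lam_inv (a b : A) : a + b = a * lam a⁻¹ b :=
  (sub_eq_iff_eq_add'.mp (lam_lam_inv a b)).symm

theorem inv_eq_neg_lam (a : A) : a⁻¹ = -lam a⁻¹ a := by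
  rw [lam_apply, inv_mul_cancel, one_eq_zero, zero_sub, neg_neg]

theorem inv_eq_neg_add_lam (a : A) : a⁻¹ = -a + lam a⁻¹ (bstar a a) := by
  rw [bstar_eq_lam_sub, map_sub, lam_inv_lam]
  conv_lhs => rw [inv_eq_neg_lam]
  abel

theorem bstar_add_right (a x y : A) : bstar a (x + y) = bstar a x + bstar a y := by
  simp only [bstar_eq_lam_sub, map_add]; abel

theorem bstar_neg_right (a x : A) : bstar a (-x) = -bstar a x := by
  simp only [bstar_eq_lam_sub, map_neg]; abel

theorem bstar_sub_right (a x y : A) : bstar a (x - y) = bstar a x - bstar a y := by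
  simp only [bstar_eq_lam_sub, map_sub]; abel

theorem bstar_zsmul_right (a : A) (m : ℤ) (x : A) : bstar a (m • x) = m • bstar a x := by
  simp only [bstar_eq_lam_sub, map_zsmul, smul_sub]

theorem bstar_zero_right (a : A) : bstar a 0 = 0 := by
  rw [bstar_eq_lam_sub, map_zero, sub_zero]

theorem bstar_zero_left (x : A) : bstar 0 x = 0 := by
  rw [bstar, zero_mul_eq, sub_zero, sub_self]

theorem bstar_inv_left (a x : A) : bstar a⁻¹ x = -lam a⁻¹ (bstar a x) := by
  rw [bstar_eq_lam_sub a, map_sub, lam_inv_lam, bstar_eq_lam_sub]; abel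

theorem bstar_add_left (a b x : A) :
    bstar (a + b) x = bstar a x + lam a (bstar (lam a⁻¹ b) x) := by
  rw [add_eq_mul_lam_inv a b, bstar_eq_lam_sub (a * _), lam_mul, lam_eq_add_bstar (lam a⁻¹ b) x,
    map_add, bstar_eq_lam_sub a x]
  abel

theorem bstar_mul (a b x : A) : bstar (a * b) x = bstar a x + bstar b x + bstar a (bstar b x) := by
  rw [bstar_eq_lam_sub (a * b), lam_mul, lam_eq_add_bstar b x, map_add, lam_eq_add_bstar a x,
    lam_eq_add_bstar a (bstar b x)]
  abel

theorem bstar_pow (u x : A) (k : ℕ) :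
    bstar (u ^ k) x = k • bstar u x + ∑ i ∈ Finset.range k, bstar (u ^ i) (bstar u x) := by
  induction k with
  | zero => rw [pow_zero, one_eq_zero, bstar_zero_left, zero_smul, Finset.sum_range_zero, add_zero]
  | succ k ih =>
    rw [pow_succ, bstar_mul, ih, Finset.sum_range_succ, succ_nsmul]
    abel

/-! ### Subbraces and ideals -/

def IsSubbrace.toAddSubgroup {S : Set A} (h : IsSubbrace S) : AddSubgroup A where
  carrier := S
  zero_mem' := h.zero_mem
  add_mem' := h.add_mem
  neg_mem' := h.neg_mem

theorem IsSubbrace.sub_mem {S : Set A} (h : IsSubbrace S) {a b : A} (ha : a ∈ S) (hb : b ∈ S) :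
    a - b ∈ S :=
  h.toAddSubgroup.sub_mem ha hb

theorem IsSubbrace.zsmul_mem {S : Set A} (h : IsSubbrace S) {a : A} (ha : a ∈ S) (m : ℤ) :
    m • a ∈ S :=
  h.toAddSubgroup.zsmul_mem ha m

theorem IsSubbrace.pow_mem {S : Set A} (h : IsSubbrace S) {a : A} (ha : a ∈ S) (n : ℕ) :
    a ^ n ∈ S := by
  induction n with
  | zero => rw [pow_zero, one_eq_zero]; exact h.zero_mem
  | succ n ih => rw [pow_succ]; exact h.mul_mem ih ha

theorem isSubbrace_univ : IsSubbrace (Set.univ : Set A) :=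
  ⟨trivial, fun _ _ => trivial, fun _ => trivial, fun _ _ => trivial, fun _ => trivial⟩

theorem IsIdeal.isSubbrace {I : Set A} (h : IsIdeal I) : IsSubbrace I := IsIdealIn.subbrace h

theorem IsIdeal.bstar_mem_left {I : Set A} (h : IsIdeal I) (a : A) {z : A} (hz : z ∈ I) :
    bstar a z ∈ I :=
  IsIdealIn.star_mem_left h a trivial z hz

theorem IsIdeal.bstar_mem_right {I : Set A} (h : IsIdeal I) (a : A) {z : A} (hz : z ∈ I) :
    bstar z a ∈ I :=
  IsIdealIn.star_mem_right h a trivial z hz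

theorem IsIdeal.lam_mem {I : Set A} (h : IsIdeal I) (a : A) {z : A} (hz : z ∈ I) :
    lam a z ∈ I := by
  rw [lam_eq_add_bstar]
  exact h.isSubbrace.add_mem hz (h.bstar_mem_left a hz)

theorem isIdeal_of_subset_nextCenter {S H : Set A} (hH : IsSubbrace H) (hSH : S ⊆ H)
    (hHS : H ⊆ nextCenter A S) : IsIdeal H where
  subset := Set.subset_univ H
  subbrace := hH
  ambient_subbrace := isSubbrace_univ
  star_mem_left a _ _ hz := hSH (hHS hz a).2
  star_mem_right a _ _ hz := hSH (hHS hz a).1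

theorem subset_nextCenter {S : Set A} (hS : IsIdeal S) : S ⊆ nextCenter A S :=
  fun _ hs x => ⟨hS.bstar_mem_right x hs, hS.bstar_mem_left x hs⟩

theorem nextCenter_mono {S S' : Set A} (h : S ⊆ S') : nextCenter A S ⊆ nextCenter A S' :=
  fun _ ha x => ⟨h (ha x).1, h (ha x).2⟩

theorem bstar_add_sub_bstar_mem {I K : Set A} (hI : IsIdeal I) (hK : IsIdeal K)
    (hKI : ∀ k ∈ K, ∀ x, bstar k x ∈ I) {k : A} (hk : k ∈ K) (a x : A) :
    bstar (a + k) x - bstar a x ∈ I := by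
  rw [bstar_add_left, add_sub_cancel_left]
  exact hI.lam_mem a (hKI _ (hK.lam_mem a⁻¹ hk) x)

theorem isIdeal_nextCenter {S : Set A} (hS : IsIdeal S) : IsIdeal (nextCenter A S) := by
  have hS' := hS.isSubbrace
  have hSN := subset_nextCenter hS
  have add_mem {z z' : A} (hz : z ∈ nextCenter A S) (hz' : z' ∈ nextCenter A S) :
      z + z' ∈ nextCenter A S := by
    intro x
    refine ⟨?_, by rw [bstar_add_right]; exact hS'.add_mem (hz x).2 (hz' x).2⟩
    have hc : bstar (lam z⁻¹ z') x ∈ S := by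
      have h := bstar_add_sub_bstar_mem hS hS (fun _ hk x => hS.bstar_mem_right x hk) (hz' z⁻¹).2
        z' x
      rw [lam_eq_add_bstar]
      simpa only [sub_add_cancel] using hS'.add_mem h (hz' x).1
    rw [bstar_add_left]
    exact hS'.add_mem (hz x).1 (hS.lam_mem z hc)
  have inv_mem {z : A} (hz : z ∈ nextCenter A S) : z⁻¹ ∈ nextCenter A S := by
    intro x
    constructor
    · rw [bstar_inv_left]
      exact hS'.neg_mem (hS.lam_mem _ (hz x).1)
    · rw [inv_eq_neg_add_lam, bstar_add_right, bstar_neg_right]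
      exact hS'.add_mem (hS'.neg_mem (hz x).2) (hS.bstar_mem_left x (hS.lam_mem _ (hz z).1))
  have neg_mem {z : A} (hz : z ∈ nextCenter A S) : -z ∈ nextCenter A S := by
    rw [eq_sub_of_add_eq (inv_eq_neg_add_lam z).symm, sub_eq_add_neg]
    exact add_mem (inv_mem hz) (hSN (hS'.neg_mem (hS.lam_mem _ (hz z).1)))
  refine isIdeal_of_subset_nextCenter ⟨hSN hS'.zero_mem, add_mem, neg_mem, fun hz hz' => ?_,
    inv_mem⟩ hSN subset_rfl
  rw [mul_eq_bstar_add_add]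
  exact add_mem (add_mem (hSN ((hz _).1)) hz) hz'

theorem pow_sub_nsmul_mem {S : Set A} (hS : IsIdeal S) {u : A} (hu : u ∈ nextCenter A S)
    (k : ℕ) : u ^ k - k • u ∈ S := by
  induction k with
  | zero => rw [pow_zero, one_eq_zero, zero_smul, sub_zero]; exact hS.isSubbrace.zero_mem
  | succ k ih =>
    rw [pow_succ, mul_eq_bstar_add_add, succ_nsmul]
    convert hS.isSubbrace.add_mem (hu (u ^ k)).2 ih using 1
    abel

theorem isIdeal_singleton_zero : IsIdeal ({0} : Set A) := by
  refine isIdeal_of_subset_nextCenter ⟨rfl, ?_, ?_, ?_, ?_⟩ subset_rfl ?_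
  · rintro a b rfl rfl; exact add_zero 0
  · rintro a rfl; exact neg_zero
  · rintro a b rfl rfl; exact mul_zero_eq 0
  · rintro a rfl; rw [Set.mem_singleton_iff, ← one_eq_zero, inv_one]
  · rintro a rfl x; exact ⟨bstar_zero_left x, bstar_zero_right x⟩

theorem isIdeal_iUnion {ι : Type*} [Nonempty ι] {S : ι → Set A} (hdir : Directed (· ⊆ ·) S)
    (hS : ∀ i, IsIdeal (S i)) : IsIdeal (⋃ i, S i) := by
  have exists_common {a b : A} (ha : a ∈ ⋃ i, S i) (hb : b ∈ ⋃ i, S i) :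
      ∃ k, a ∈ S k ∧ b ∈ S k := by
    obtain ⟨i, hi⟩ := Set.mem_iUnion.mp ha
    obtain ⟨j, hj⟩ := Set.mem_iUnion.mp hb
    obtain ⟨k, hik, hjk⟩ := hdir i j
    exact ⟨k, hik hi, hjk hj⟩
  have mem {k : ι} {a : A} (h : a ∈ S k) : a ∈ ⋃ i, S i := Set.mem_iUnion.mpr ⟨k, h⟩
  refine isIdeal_of_subset_nextCenter ⟨?_, fun ha hb => ?_, fun ha => ?_, fun ha hb => ?_,
    fun ha => ?_⟩ subset_rfl fun a ha x => ?_
  · exact mem (hS (Classical.arbitrary ι)).isSubbrace.zero_mem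
  · obtain ⟨k, hak, hbk⟩ := exists_common ha hb
    exact mem ((hS k).isSubbrace.add_mem hak hbk)
  · obtain ⟨k, hak⟩ := Set.mem_iUnion.mp ha
    exact mem ((hS k).isSubbrace.neg_mem hak)
  · obtain ⟨k, hak, hbk⟩ := exists_common ha hb
    exact mem ((hS k).isSubbrace.mul_mem hak hbk)
  · obtain ⟨k, hak⟩ := Set.mem_iUnion.mp ha
    exact mem ((hS k).isSubbrace.inv_mem hak)
  · obtain ⟨k, hak⟩ := Set.mem_iUnion.mp ha
    exact ⟨mem ((hS k).bstar_mem_right x hak), mem ((hS k).bstar_mem_left x hak)⟩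

/-! ### The upper `⋆`-central series -/

theorem zetaOrd_zero : zetaOrd A (0 : Ordinal.{v}) = {0} :=
  Ordinal.limitRecOn_zero _ _ _

theorem zetaOrd_add_one (o : Ordinal.{v}) : zetaOrd A (o + 1) = nextCenter A (zetaOrd A o) :=
  Ordinal.limitRecOn_add_one _ _ _ _

theorem zetaOrd_limit {o : Ordinal.{v}} (h : Order.IsSuccLimit o) :
    zetaOrd A o = ⋃ (o' : Ordinal) (_ : o' < o), zetaOrd A o' :=
  Ordinal.limitRecOn_limit _ _ _ _ h

theorem zetaOrd_subset {s : Set A} (h0 : (0 : A) ∈ s)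
    (hsucc : ∀ o : Ordinal.{v}, zetaOrd A o ⊆ s → nextCenter A (zetaOrd A o) ⊆ s)
    (o : Ordinal.{v}) : zetaOrd A o ⊆ s := by
  induction o using Ordinal.limitRecOn with
  | zero => rw [zetaOrd_zero]; exact Set.singleton_subset_iff.mpr h0
  | add_one o ih => rw [zetaOrd_add_one]; exact hsucc o ih
  | limit o ho ih => rw [zetaOrd_limit ho]; exact Set.iUnion₂_subset ih

theorem isIdeal_zetaOrd (o : Ordinal.{v}) : IsIdeal (zetaOrd A o) := by
  suffices h : IsIdeal (zetaOrd A o) ∧ ∀ o' ≤ o, zetaOrd A o' ⊆ zetaOrd A o from h.1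
  induction o using Ordinal.limitRecOn with
  | zero =>
    refine ⟨by rw [zetaOrd_zero]; exact isIdeal_singleton_zero, fun o' h => ?_⟩
    rw [nonpos_iff_eq_zero.mp h]
  | add_one o ih =>
    refine ⟨by rw [zetaOrd_add_one]; exact isIdeal_nextCenter ih.1, fun o' h => ?_⟩
    rcases h.lt_or_eq with h | rfl
    · rw [zetaOrd_add_one]
      exact (ih.2 o' (Order.lt_add_one_iff.mp h)).trans (subset_nextCenter ih.1)
    · exact subset_rfl
  | limit o ho ih =>
    have hunion : zetaOrd A o = ⋃ o' : Set.Iio o, zetaOrd A o' := by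
      rw [zetaOrd_limit ho, Set.iUnion_subtype]; rfl
    have hmono : Monotone fun o' : Set.Iio o => zetaOrd A o' :=
      fun o₁ o₂ h => (ih o₂ o₂.2).2 o₁ h
    refine ⟨?_, fun o' h => ?_⟩
    · have : Nonempty (Set.Iio o) := ⟨⟨0, ho.bot_lt⟩⟩
      rw [hunion]
      exact isIdeal_iUnion hmono.directed_le fun o' => (ih o' o'.2).1
    · rcases h.lt_or_eq with h | rfl
      · rw [hunion]; exact Set.subset_iUnion_of_subset ⟨o', h⟩ subset_rfl
      · exact subset_rfl

/-! ### Torsion is an ideal -/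

theorem isOfFinAddOrder_lam (a : A) {t : A} (ht : IsOfFinAddOrder t) :
    IsOfFinAddOrder (lam a t) :=
  ht.mono (addOrderOf_map_dvd (lam a) t)

theorem isOfFinAddOrder_bstar_of_right (a : A) {t : A} (ht : IsOfFinAddOrder t) :
    IsOfFinAddOrder (bstar a t) := by
  rw [bstar_eq_lam_sub]
  exact (AddCommGroup.torsion A).sub_mem (isOfFinAddOrder_lam a ht) ht

theorem isSubbrace_setOf_isOfFinAddOrder : IsSubbrace {a : A | IsOfFinAddOrder a} where
  zero_mem := IsOfFinAddOrder.zero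
  add_mem ha hb := ha.add hb
  neg_mem ha := ha.neg
  mul_mem {a b} ha hb := by
    show IsOfFinAddOrder (a * b)
    rw [mul_eq_bstar_add_add]
    exact ((isOfFinAddOrder_bstar_of_right a hb).add ha).add hb
  inv_mem {a} ha := by
    show IsOfFinAddOrder a⁻¹
    rw [inv_eq_neg_lam]
    exact (isOfFinAddOrder_lam a⁻¹ ha).neg

theorem isOfFinAddOrder_bstar_of_pow {S : Set A} (hS : IsIdeal S) {t x : A}
    (hSx : ∀ s ∈ S, IsOfFinAddOrder s → IsOfFinAddOrder (bstar s x))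
    (ht : t ∈ nextCenter A S) (htor : IsOfFinAddOrder t)
    (hpow : ∀ i : ℕ, IsOfFinAddOrder (bstar (t ^ i) (bstar t x))) :
    IsOfFinAddOrder (bstar t x) := by
  set n := addOrderOf t
  have htn : t ^ n ∈ S := by
    simpa only [n, addOrderOf_nsmul_eq_zero, sub_zero] using pow_sub_nsmul_mem hS ht n
  have h := hSx _ htn (isSubbrace_setOf_isOfFinAddOrder.pow_mem htor n)
  rw [bstar_pow] at h
  have hsum : IsOfFinAddOrder (∑ i ∈ Finset.range n, bstar (t ^ i) (bstar t x)) :=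
    (AddCommGroup.torsion A).sum_mem fun i _ => hpow i
  have hn := (AddCommGroup.torsion A).sub_mem h hsum
  rw [add_sub_cancel_right] at hn
  exact IsOfFinAddOrder.of_nsmul hn htor.addOrderOf_pos.ne'

theorem isOfFinAddOrder_bstar_of_left (hhc : IsStarHypercentral A) {t : A}
    (ht : IsOfFinAddOrder t) (x : A) : IsOfFinAddOrder (bstar t x) := by
  obtain ⟨γ, hγ⟩ := hhc
  have mem (a : A) : a ∈ zetaOrd A γ := hγ ▸ Set.mem_univ a
  suffices h : ∀ β : Ordinal.{u},
      zetaOrd A β ⊆ {t | IsOfFinAddOrder t → ∀ x, IsOfFinAddOrder (bstar t x)} from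
    h γ (mem t) ht x
  intro β
  refine zetaOrd_subset (fun _ x => ?_) (fun β ih => ?_) β
  · rw [bstar_zero_left]; exact IsOfFinAddOrder.zero
  have hβ := isIdeal_nextCenter (isIdeal_zetaOrd (A := A) β)
  have inner : ∀ α : Ordinal.{u}, zetaOrd A α ⊆
      {x | ∀ t ∈ nextCenter A (zetaOrd A β), IsOfFinAddOrder t → IsOfFinAddOrder (bstar t x)} :=
    zetaOrd_subset (fun _ _ _ => by rw [bstar_zero_right]; exact IsOfFinAddOrder.zero)
      fun α ihα x hx t ht htor =>
        isOfFinAddOrder_bstar_of_pow (isIdeal_zetaOrd β) (fun s hs hstor => ih hs hstor x) ht htor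
          fun i => ihα (hx t).2 _ (hβ.isSubbrace.pow_mem ht i)
            (isSubbrace_setOf_isOfFinAddOrder.pow_mem htor i)
  exact fun t ht htor x => inner γ (mem x) t ht htor

theorem isIdeal_setOf_isOfFinAddOrder (hhc : IsStarHypercentral A) :
    IsIdeal {a : A | IsOfFinAddOrder a} where
  subset := Set.subset_univ _
  subbrace := isSubbrace_setOf_isOfFinAddOrder
  ambient_subbrace := isSubbrace_univ
  star_mem_left a _ _ ht := isOfFinAddOrder_bstar_of_right a ht
  star_mem_right a _ _ ht := isOfFinAddOrder_bstar_of_left hhc ht a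

/-! ### Stars below the second centre modulo an ideal -/

section SecondCenter

variable {I : Set A}

theorem bstar_add_sub_bstar_add_bstar_mem (hI : IsIdeal I) {v : A}
    (hv : v ∈ nextCenter A (nextCenter A I)) (u x : A) :
    bstar (u + v) x - (bstar u x + bstar v x) ∈ I := by
  -- `(u + v) ⋆ x = u ⋆ x + λ_u (c ⋆ x)` with `c = λ_{u⁻¹} v ≡ v` modulo `nextCenter A I`
  have hD := isIdeal_nextCenter hI
  have hc : bstar (lam u⁻¹ v) x - bstar v x ∈ I := by
    rw [lam_eq_add_bstar]
    exact bstar_add_sub_bstar_mem hI hD (fun _ hk x => (hk x).1) (hv u⁻¹).2 v x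
  have hcD : bstar (lam u⁻¹ v) x ∈ nextCenter A I := ((isIdeal_nextCenter hD).lam_mem u⁻¹ hv x).1
  rw [bstar_add_left, lam_eq_add_bstar]
  convert hI.isSubbrace.add_mem hc (hcD u).2 using 1
  abel

theorem zsmul_bstar_sub_mem (hI : IsIdeal I) {z : A} (hz : z ∈ nextCenter A (nextCenter A I))
    (m : ℤ) (x : A) : bstar (m • z) x - m • bstar z x ∈ I := by
  have hI' := hI.isSubbrace
  induction m using Int.induction_on with
  | zero => rw [zero_smul, zero_smul, bstar_zero_left, sub_zero]; exact hI'.zero_mem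
  | succ k ih =>
    convert hI'.add_mem (bstar_add_sub_bstar_add_bstar_mem hI hz ((k : ℤ) • z) x) ih using 1
    simp only [add_smul, one_smul]
    abel
  | pred k ih =>
    have h := bstar_add_sub_bstar_add_bstar_mem hI hz ((-(k : ℤ) - 1) • z) x
    rw [sub_smul, one_smul, sub_add_cancel] at h
    convert hI'.sub_mem ih h using 1
    simp only [sub_smul, one_smul]
    abel

theorem bstar_sub_zsmul_bstar_mem (hI : IsIdeal I) {z u : A}
    (hz : z ∈ nextCenter A (nextCenter A I)) {m : ℤ} (hu : u - m • z ∈ nextCenter A I) (x : A) :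
    bstar u x - m • bstar z x ∈ I := by
  have h := bstar_add_sub_bstar_mem hI (isIdeal_nextCenter hI) (fun _ hk x => (hk x).1) hu
    (m • z) x
  rw [add_sub_cancel] at h
  convert hI.isSubbrace.add_mem h (zsmul_bstar_sub_mem hI hz m x) using 1
  abel

theorem bstar_sub_mul_zsmul_bstar_mem (hI : IsIdeal I) {z u v : A}
    (hz : z ∈ nextCenter A (nextCenter A I)) {m₁ m₂ : ℤ} (hu : u - m₁ • z ∈ nextCenter A I)
    (hv : v - m₂ • z ∈ nextCenter A I) : bstar u v - (m₁ * m₂) • bstar z z ∈ I := by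
  have h := (hv z).2
  rw [bstar_sub_right, bstar_zsmul_right] at h
  convert hI.isSubbrace.add_mem (bstar_sub_zsmul_bstar_mem hI hz hu v)
    (hI.isSubbrace.zsmul_mem h m₁) using 1
  rw [mul_smul, smul_sub]
  abel

end SecondCenter

/-- `S + ℤa + ℤb`. -/
def addZSpan (S : Set A) (a b : A) : Set A := {u | ∃ m k : ℤ, u - (m • a + k • b) ∈ S}

section AddZSpan

variable {S : Set A} {a b : A}

theorem subset_addZSpan : S ⊆ addZSpan S a b :=
  fun u hu => ⟨0, 0, by rwa [zero_smul, zero_smul, add_zero, sub_zero]⟩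

theorem addZSpan_subset {S' : Set A} (hS' : IsSubbrace S') (hSS' : S ⊆ S') (ha : a ∈ S')
    (hb : b ∈ S') : addZSpan S a b ⊆ S' := by
  rintro u ⟨m, k, h⟩
  simpa only [sub_add_cancel] using
    hS'.add_mem (hSS' h) (hS'.add_mem (hS'.zsmul_mem ha m) (hS'.zsmul_mem hb k))

theorem addZSpan_mono {S' : Set A} (hSS' : S ⊆ S') {z c : A} {p q p' q' : ℤ} (hp : p' ∣ p)
    (hq : q' ∣ q) : addZSpan S (p • z) (q • c) ⊆ addZSpan S' (p' • z) (q' • c) := by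
  obtain ⟨r, rfl⟩ := hp
  obtain ⟨s, rfl⟩ := hq
  rintro u ⟨m, k, h⟩
  refine ⟨r * m, s * k, ?_⟩
  convert hSS' h using 3 <;> rw [smul_smul, smul_smul] <;> ring_nf

theorem isSubbrace_addZSpan_of_bstar_mem (hS : IsSubbrace S)
    (hstar : ∀ u ∈ addZSpan S a b, ∀ v ∈ addZSpan S a b, bstar u v ∈ addZSpan S a b)
    (hsq : ∀ u ∈ addZSpan S a b, ∀ x, bstar x (bstar u u) ∈ S) : IsSubbrace (addZSpan S a b) := by
  have add_mem {u v : A} (hu : u ∈ addZSpan S a b) (hv : v ∈ addZSpan S a b) :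
      u + v ∈ addZSpan S a b := by
    obtain ⟨m, k, h⟩ := hu
    obtain ⟨m', k', h'⟩ := hv
    refine ⟨m + m', k + k', ?_⟩
    convert hS.add_mem h h' using 1
    simp only [add_smul]
    abel
  have neg_mem {u : A} (hu : u ∈ addZSpan S a b) : -u ∈ addZSpan S a b := by
    obtain ⟨m, k, h⟩ := hu
    refine ⟨-m, -k, ?_⟩
    convert hS.neg_mem h using 1
    simp only [neg_smul]
    abel
  refine ⟨subset_addZSpan hS.zero_mem, add_mem, neg_mem, fun hu hv => ?_, fun hu => ?_⟩
  · rw [mul_eq_bstar_add_add]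
    exact add_mem (add_mem (hstar _ hu _ hv) hu) hv
  · rw [inv_eq_neg_add_lam, lam_eq_add_bstar]
    exact add_mem (neg_mem hu) (add_mem (hstar _ hu _ hu) (subset_addZSpan (hsq _ hu _)))

theorem isIdeal_addZSpan (hS : IsIdeal S) (ha : a ∈ nextCenter A S) (hb : b ∈ nextCenter A S) :
    IsIdeal (addZSpan S a b) := by
  have hsub : addZSpan S a b ⊆ nextCenter A S :=
    addZSpan_subset (isIdeal_nextCenter hS).isSubbrace (subset_nextCenter hS) ha hb
  refine isIdeal_of_subset_nextCenter (isSubbrace_addZSpan_of_bstar_mem hS.isSubbrace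
    (fun u hu v _ => subset_addZSpan (hsub hu v).1)
    (fun u hu x => hS.bstar_mem_left x (hsub hu u).1)) subset_addZSpan hsub

end AddZSpan

section IdealChain

variable {I : Set A} {z c : A}

theorem exists_sub_zsmul_mem_of_mem_addZSpan (hI : IsIdeal I) {J : Set A}
    (hJ : J ⊆ nextCenter A I) (hc : c ∈ nextCenter A I) {p q : ℤ} {u : A}
    (hu : u ∈ addZSpan J (p • z) (q • c)) : ∃ m : ℤ, u - (m * p) • z ∈ nextCenter A I := by
  have hD := (isIdeal_nextCenter hI).isSubbrace
  obtain ⟨m, k, h⟩ := hu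
  refine ⟨m, ?_⟩
  convert hD.add_mem (hJ h) (hD.zsmul_mem (hD.zsmul_mem hc q) k) using 1
  rw [mul_smul]
  abel

theorem bstar_mem_addZSpan (hI : IsIdeal I) (hz : z ∈ nextCenter A (nextCenter A I)) {e : ℤ}
    (he : bstar z z - e • c ∈ I) {u v : A} {m₁ m₂ p q : ℤ} (hu : u - m₁ • z ∈ nextCenter A I)
    (hv : v - m₂ • z ∈ nextCenter A I) (hdiv : q ∣ m₁ * m₂ * e) :
    bstar u v ∈ addZSpan I (p • z) (q • c) := by
  obtain ⟨r, hr⟩ := hdiv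
  refine ⟨0, r, ?_⟩
  convert hI.isSubbrace.add_mem (bstar_sub_mul_zsmul_bstar_mem hI hz hu hv)
    (hI.isSubbrace.zsmul_mem he (m₁ * m₂)) using 1
  rw [zero_smul, zero_add, smul_smul, mul_comm r q, ← hr, smul_sub, smul_smul]
  abel

theorem isSubbrace_addZSpan (hI : IsIdeal I) (hz : z ∈ nextCenter A (nextCenter A I))
    (hc : c ∈ nextCenter A I) {e : ℤ} (he : bstar z z - e • c ∈ I) {p q : ℤ}
    (hdiv : q ∣ p * p * e) : IsSubbrace (addZSpan I (p • z) (q • c)) := by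
  have hD := isIdeal_nextCenter hI
  have hN := (isIdeal_nextCenter hD).isSubbrace
  refine isSubbrace_addZSpan_of_bstar_mem hI.isSubbrace (fun u hu v hv => ?_) (fun u hu x => ?_)
  · obtain ⟨m, hm⟩ := exists_sub_zsmul_mem_of_mem_addZSpan hI (subset_nextCenter hI) hc hu
    obtain ⟨m', hm'⟩ := exists_sub_zsmul_mem_of_mem_addZSpan hI (subset_nextCenter hI) hc hv
    exact bstar_mem_addZSpan hI hz he hm hm' (hdiv.trans ⟨m * m', by ring⟩)
  · have huN : u ∈ nextCenter A (nextCenter A I) :=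
      addZSpan_subset hN ((subset_nextCenter hI).trans (subset_nextCenter hD)) (hN.zsmul_mem hz p)
        (subset_nextCenter hD (hD.isSubbrace.zsmul_mem hc q)) hu
    exact ((huN u).1 x).2

theorem isIdealIn_addZSpan (hI : IsIdeal I) (hz : z ∈ nextCenter A (nextCenter A I))
    (hc : c ∈ nextCenter A I) {e : ℤ} (he : bstar z z - e • c ∈ I) {J : Set A} (hIJ : I ⊆ J)
    (hJ : J ⊆ nextCenter A I) {p q p' q' : ℤ} (hJ' : IsSubbrace (addZSpan J (p' • z) (q' • c)))
    (hp : p' ∣ p) (hq : q' ∣ q) (hdiv : q ∣ p' * p * e) :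
    IsIdealIn (addZSpan I (p • z) (q • c)) (addZSpan J (p' • z) (q' • c)) where
  subset := addZSpan_mono hIJ hp hq
  subbrace := isSubbrace_addZSpan hI hz hc he (hdiv.trans (mul_dvd_mul_right
    (mul_dvd_mul_right hp p) e))
  ambient_subbrace := hJ'
  star_mem_left a ha w hw := by
    obtain ⟨m, hm⟩ := exists_sub_zsmul_mem_of_mem_addZSpan hI hJ hc ha
    obtain ⟨k, hk⟩ := exists_sub_zsmul_mem_of_mem_addZSpan hI (subset_nextCenter hI) hc hw
    exact bstar_mem_addZSpan hI hz he hm hk (hdiv.trans ⟨m * k, by ring⟩)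
  star_mem_right a ha w hw := by
    obtain ⟨m, hm⟩ := exists_sub_zsmul_mem_of_mem_addZSpan hI hJ hc ha
    obtain ⟨k, hk⟩ := exists_sub_zsmul_mem_of_mem_addZSpan hI (subset_nextCenter hI) hc hw
    exact bstar_mem_addZSpan hI hz he hk hm (hdiv.trans ⟨m * k, by ring⟩)

theorem isIdeal_addZSpan_two_four (hT : IsTBrace A) (hI : IsIdeal I)
    (hz : z ∈ nextCenter A (nextCenter A I)) (hc : c ∈ nextCenter A I) {e : ℤ}
    (he : bstar z z - e • c ∈ I) : IsIdeal (addZSpan I ((2 : ℤ) • z) ((4 : ℤ) • c)) := by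
  have hD := isIdeal_nextCenter hI
  have h₀ : IsIdeal (addZSpan (nextCenter A I) ((1 : ℤ) • z) ((1 : ℤ) • c)) :=
    isIdeal_addZSpan hD (by rwa [one_smul]) (by rw [one_smul]; exact subset_nextCenter hD hc)
  have h₁ : IsIdeal (addZSpan I ((1 : ℤ) • z) ((1 : ℤ) • c)) :=
    hT _ _ (isIdealIn_addZSpan hI hz hc he (subset_nextCenter hI) subset_rfl h₀.isSubbrace
      dvd_rfl dvd_rfl (one_dvd _)) h₀
  have h₂ : IsIdeal (addZSpan I ((2 : ℤ) • z) ((2 : ℤ) • c)) :=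
    hT _ _ (isIdealIn_addZSpan hI hz hc he subset_rfl (subset_nextCenter hI) h₁.isSubbrace
      (one_dvd _) (one_dvd _) ⟨e, by ring⟩) h₁
  exact hT _ _ (isIdealIn_addZSpan hI hz hc he subset_rfl (subset_nextCenter hI) h₂.isSubbrace
    dvd_rfl ⟨2, by norm_num⟩ ⟨e, by ring⟩) h₂

end IdealChain

/-! ### Quotients by an ideal with torsion-free quotient -/

section Isolated

variable {I : Set A} {z : A}

theorem mem_nextCenter_of_zsmul_mem (hI : IsIdeal I)
    (hIsol : ∀ {m : ℤ} {a : A}, m ≠ 0 → m • a ∈ I → a ∈ I)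
    (hz : z ∈ nextCenter A (nextCenter A I)) {m : ℤ} (hm : m ≠ 0)
    (hmz : m • z ∈ nextCenter A I) : z ∈ nextCenter A I := by
  intro y
  constructor
  · have h := hI.isSubbrace.sub_mem (hmz y).1 (zsmul_bstar_sub_mem hI hz m y)
    rw [sub_sub_cancel] at h
    exact hIsol hm h
  · have h := (hmz y).2
    rw [bstar_zsmul_right] at h
    exact hIsol hm h

theorem mem_nextCenter_or_mem_of_two_zsmul_mem (hI : IsIdeal I)
    (hIsol : ∀ {m : ℤ} {a : A}, m ≠ 0 → m • a ∈ I → a ∈ I)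
    (hz : z ∈ nextCenter A (nextCenter A I)) {c : A} (hc : c ∈ nextCenter A I)
    (h2c : (2 : ℤ) • c ∈ addZSpan I ((2 : ℤ) • z) ((4 : ℤ) • c)) :
    z ∈ nextCenter A I ∨ c ∈ I := by
  obtain ⟨m, k, h⟩ := h2c
  rcases eq_or_ne m 0 with rfl | hm
  · refine .inr (hIsol (m := 2 - 4 * k) (by omega) ?_)
    convert h using 2
    module
  · have hD := (isIdeal_nextCenter hI).isSubbrace
    refine .inl (mem_nextCenter_of_zsmul_mem hI hIsol hz (mul_ne_zero two_ne_zero hm) ?_)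
    have hmz : (2 * m) • z
        = (2 - 4 * k) • c - ((2 : ℤ) • c - (m • (2 : ℤ) • z + k • (4 : ℤ) • c)) := by
      module
    rw [hmz]
    exact hD.sub_mem (hD.zsmul_mem hc _) (subset_nextCenter hI h)

theorem mem_nextCenter_of_mem_nextCenter_nextCenter (hT : IsTBrace A) (hI : IsIdeal I)
    (hIsol : ∀ {m : ℤ} {a : A}, m ≠ 0 → m • a ∈ I → a ∈ I)
    (hz : z ∈ nextCenter A (nextCenter A I)) : z ∈ nextCenter A I := by
  have h2z (c : A) : (2 : ℤ) • z ∈ addZSpan I ((2 : ℤ) • z) ((4 : ℤ) • c) :=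
    ⟨1, 0, by rw [one_smul, zero_smul, add_zero, sub_self]; exact hI.isSubbrace.zero_mem⟩
  by_contra hzD
  have hzz : bstar z z ∈ I := by
    have hJ := isIdeal_addZSpan_two_four hT hI hz (hz z).1 (e := 1)
      (by rw [one_smul, sub_self]; exact hI.isSubbrace.zero_mem)
    refine (mem_nextCenter_or_mem_of_two_zsmul_mem hI hIsol hz (hz z).1 ?_).resolve_left hzD
    have h := hJ.bstar_mem_left z (h2z _)
    rwa [bstar_zsmul_right] at h
  have he (c : A) : bstar z z - (0 : ℤ) • c ∈ I := by
    rwa [zero_smul, sub_zero]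
  refine hzD fun y => ⟨?_, ?_⟩
  · have hJ := isIdeal_addZSpan_two_four hT hI hz (hz y).1 (he _)
    refine (mem_nextCenter_or_mem_of_two_zsmul_mem hI hIsol hz (hz y).1 ?_).resolve_left hzD
    have h := hJ.isSubbrace.sub_mem (hJ.bstar_mem_right y (h2z _))
      (subset_addZSpan (zsmul_bstar_sub_mem hI hz 2 y))
    rwa [sub_sub_cancel] at h
  · have hJ := isIdeal_addZSpan_two_four hT hI hz (hz y).2 (he _)
    refine (mem_nextCenter_or_mem_of_two_zsmul_mem hI hIsol hz (hz y).2 ?_).resolve_left hzD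
    have h := hJ.bstar_mem_left y (h2z _)
    rwa [bstar_zsmul_right] at h

theorem zetaOrd_subset_nextCenter (hT : IsTBrace A) (hI : IsIdeal I)
    (hIsol : ∀ {m : ℤ} {a : A}, m ≠ 0 → m • a ∈ I → a ∈ I) (o : Ordinal.{v}) :
    zetaOrd A o ⊆ nextCenter A I :=
  zetaOrd_subset (subset_nextCenter hI hI.isSubbrace.zero_mem)
    (fun _ ih => (nextCenter_mono ih).trans fun _ =>
      mem_nextCenter_of_mem_nextCenter_nextCenter hT hI hIsol) o

end Isolated

end LeftBrace

open LeftBrace in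
theorem torsion_isIdeal_and_quotient_abelian_general
    {A : Type u} [LeftBrace A] (hT : IsTBrace A)
    (hhc : IsStarHypercentral A) :
    IsIdeal {a : A | IsOfFinAddOrder a} ∧
      ∀ a b : A, bstar a b ∈ {a : A | IsOfFinAddOrder a} := by
  have hTid := isIdeal_setOf_isOfFinAddOrder hhc
  obtain ⟨γ, hγ⟩ := hhc
  have hD := zetaOrd_subset_nextCenter hT hTid (fun hm ha => IsOfFinAddOrder.of_zsmul ha hm) γ
  exact ⟨hTid, fun a b => (hD (hγ ▸ Set.mem_univ a) b).1⟩

open LeftBrace in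
/-- **Corollary 3.** If `A` is a non-periodic `⋆`-hypercentral T-brace and `T` is the
torsion subgroup of `(A,+)`, then `T` is an ideal of `A` and `A/T` is an abelian brace
(equivalently, `a ⋆ b ∈ T` for all `a, b ∈ A`). -/
theorem torsion_isIdeal_and_quotient_abelian
    {A : Type u} [LeftBrace A] (hT : IsTBrace A)
    (hhc : IsStarHypercentral A)
    (hnp : ¬ ∀ a : A, IsOfFinAddOrder a) :
    IsIdeal {a : A | IsOfFinAddOrder a} ∧
      ∀ a b : A, bstar a b ∈ {a : A | IsOfFinAddOrder a} :=
  torsion_isIdeal_and_quotient_abelian_general hT hhc
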